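/- arXiv:1501.00837 — 2 statements merged into one kernel-verified Lean document; each statement's English description precedes it below -/
import Mathlib

section
/- For every function x in the class 𝒳 (all sums x = Σ_{m,k} θ_{m,k} e_{m,k} with θ_{m,k} ∈ {−1,+1}) and every t ∈ [0,1], one has |x(t)| ≤ x̂(t), where x̂ is the function with all coefficients equal to +1. Consequently max_{x∈𝒳} max_{t∈[0,1]} |x(t)| = (2 + √2)/3. -/
/-!
On `[0, 1]` the level-`m` block `∑ₖ e m k t` equals `a ^ m * δ (2 ^ m * t)`, where `a = 1/√2` and
`δ = distNearestInt`. As `|θ| = 1` and `e ≥ 0`, each level of `x` is bounded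
by that of `xhat`, so `|x t| ≤ xhat t = ∑ a ^ m δ (2 ^ m t)`.

For `2/3 ≤ a < 1` this Takagi-type series is at most `C = 1 / (3 (1 - a))`: with the correction
`ψ = deficit = 3/4 (1/3 - δ)⁺` one checks the one-step inequality `δ y + ψ y ≤ 1/3 + a ψ (2 y)`, and since
`a C = C - 1/3` it gives `∑_{m<n} a ^ m δ (2 ^ m y) ≤ C - ψ y` by induction on `n`.
Equality holds at `y = 1/3`, whose doubling orbit stays at distance `1/3` from the integers.
For `a = 1/√2` one gets `C = (2 + √2) / 3`.
-/

noncomputable def e00 (t : ℝ) : ℝ := max (min t (1 - t)) 0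

noncomputable def e (m : ℕ) (k : ℤ) (t : ℝ) : ℝ :=
  (2 : ℝ) ^ (-(m : ℝ) / 2) * e00 ((2 : ℝ) ^ m * t - k)

noncomputable def xhat (t : ℝ) : ℝ :=
  ∑' m : ℕ, ∑ k ∈ Finset.range (2 ^ m), e m k t

def mathcalX : Set (ℝ → ℝ) :=
  {x | ∃ θ : ℕ → ℕ → ℝ, (∀ m k, θ m k = 1 ∨ θ m k = -1) ∧
    ∀ t, x t = ∑' m : ℕ, ∑ k ∈ Finset.range (2 ^ m), θ m k * e m k t}

noncomputable def distNearestInt (y : ℝ) : ℝ := min (Int.fract y) (1 - Int.fract y)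

lemma distNearestInt_nonneg (y : ℝ) : 0 ≤ distNearestInt y :=
  le_min (Int.fract_nonneg y) (by linarith [Int.fract_lt_one y])

lemma distNearestInt_le_half (y : ℝ) : distNearestInt y ≤ 1 / 2 := by
  unfold distNearestInt
  rcases le_total (Int.fract y) (1 / 2) with h | h
  · exact (min_le_left _ _).trans h
  · exact (min_le_right _ _).trans (by linarith)

lemma distNearestInt_add_intCast (y : ℝ) (n : ℤ) :
    distNearestInt (y + n) = distNearestInt y := by
  simp only [distNearestInt, Int.fract_add_intCast]

lemma distNearestInt_sub_natCast (y : ℝ) (n : ℕ) :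
    distNearestInt (y - n) = distNearestInt y := by
  simp only [distNearestInt, Int.fract_sub_natCast]

lemma distNearestInt_of_mem_Ico {z : ℝ} (hz : z ∈ Set.Ico 0 1) :
    distNearestInt z = min z (1 - z) := by
  rw [distNearestInt, Int.fract_eq_self.mpr hz]

lemma distNearestInt_two_mul (y : ℝ) :
    distNearestInt (2 * y) = min (2 * distNearestInt y) (1 - 2 * distNearestInt y) := by
  have hu := Int.fract_nonneg y
  have hu' := Int.fract_lt_one y
  set u := Int.fract y
  have hy : distNearestInt y = min u (1 - u) := rfl
  have h2y : distNearestInt (2 * y) = distNearestInt (2 * u) := by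
    rw [← distNearestInt_add_intCast (2 * u) (2 * ⌊y⌋)]
    congr 1
    push_cast
    linarith [Int.floor_add_fract y]
  rcases lt_or_ge u (1 / 2) with h | h
  · rw [h2y, distNearestInt_of_mem_Ico ⟨by linarith, by linarith⟩, hy,
      min_eq_left (show u ≤ 1 - u by linarith)]
  · rw [h2y, show 2 * u = (2 * u - 1) + ((1 : ℤ) : ℝ) by push_cast; ring,
      distNearestInt_add_intCast, distNearestInt_of_mem_Ico ⟨by linarith, by linarith⟩, hy,
      min_eq_right (show 1 - u ≤ u by linarith), min_comm]
    ring_nf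

lemma e00_eq_distNearestInt {z : ℝ} (h0 : 0 ≤ z) (h1 : z ≤ 1) : e00 z = distNearestInt z := by
  rcases h1.lt_or_eq with h1 | rfl
  · rw [e00, distNearestInt_of_mem_Ico ⟨h0, h1⟩, max_eq_left (le_min h0 (by linarith))]
  · norm_num [e00, distNearestInt]

lemma e00_eq_zero_of_nonpos {z : ℝ} (h : z ≤ 0) : e00 z = 0 :=
  max_eq_right ((min_le_left _ _).trans h)

lemma e00_eq_zero_of_one_le {z : ℝ} (h : 1 ≤ z) : e00 z = 0 :=
  max_eq_right ((min_le_right _ _).trans (by linarith))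

lemma sum_range_e00_sub (n : ℕ) {y : ℝ} (h0 : 0 ≤ y) (hn : y ≤ n) :
    ∑ k ∈ Finset.range n, e00 (y - k) = distNearestInt y := by
  induction n with
  | zero =>
    obtain rfl : y = 0 := le_antisymm (by simpa using hn) h0
    norm_num [distNearestInt]
  | succ n ih =>
    rw [Finset.sum_range_succ]
    rcases le_or_gt y n with hy | hy
    · rw [ih hy, e00_eq_zero_of_nonpos (by linarith), add_zero]
    · have hlow : ∀ k ∈ Finset.range n, e00 (y - k) = 0 := fun k hk => by
        have : (k : ℝ) + 1 ≤ n := by exact_mod_cast Finset.mem_range.mp hk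
        exact e00_eq_zero_of_one_le (by linarith)
      push_cast at hn
      rw [Finset.sum_eq_zero hlow, zero_add,
        e00_eq_distNearestInt (by linarith) (by linarith), distNearestInt_sub_natCast]

lemma two_rpow_neg_half_mul (m : ℕ) : (2 : ℝ) ^ (-(m : ℝ) / 2) = (√2)⁻¹ ^ m := by
  rw [Real.sqrt_eq_rpow, ← Real.rpow_neg (by norm_num), ← Real.rpow_mul_natCast (by norm_num)]
  ring_nf

lemma sum_range_e {t : ℝ} (ht : t ∈ Set.Icc (0 : ℝ) 1) (m : ℕ) :
    ∑ k ∈ Finset.range (2 ^ m), e m k t = (√2)⁻¹ ^ m * distNearestInt (2 ^ m * t) := by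
  have h0 : 0 ≤ (2 : ℝ) ^ m * t := mul_nonneg (by positivity) ht.1
  have h1 : (2 : ℝ) ^ m * t ≤ ((2 ^ m : ℕ) : ℝ) := by
    push_cast
    exact mul_le_of_le_one_right (by positivity) ht.2
  simp only [e, two_rpow_neg_half_mul, Int.cast_natCast, ← Finset.mul_sum,
    sum_range_e00_sub _ h0 h1]

noncomputable def deficit (y : ℝ) : ℝ := 3 / 4 * max (1 / 3 - distNearestInt y) 0

lemma deficit_nonneg (y : ℝ) : 0 ≤ deficit y := by
  unfold deficit
  positivity

lemma deficit_le (y : ℝ) : deficit y ≤ 1 / 4 := by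
  have hmax : max (1 / 3 - distNearestInt y) 0 ≤ 1 / 3 :=
    max_le (by linarith [distNearestInt_nonneg y]) (by norm_num)
  unfold deficit
  linarith

lemma distNearestInt_add_deficit_le {a : ℝ} (ha : 2 / 3 ≤ a) (y : ℝ) :
    distNearestInt y + deficit y ≤ 1 / 3 + a * deficit (2 * y) := by
  have h0 := distNearestInt_nonneg y
  have h1 := distNearestInt_le_half y
  simp only [deficit, distNearestInt_two_mul]
  set d := distNearestInt y
  simp only [max_def, min_def]
  split_ifs <;> nlinarith

section Series

variable {a : ℝ}

lemma sum_range_pow_mul_distNearestInt_le (ha : 2 / 3 ≤ a) (ha1 : a < 1) (n : ℕ) (y : ℝ) :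
    ∑ m ∈ Finset.range n, a ^ m * distNearestInt (2 ^ m * y) ≤ (3 * (1 - a))⁻¹ - deficit y := by
  have hC : a * (3 * (1 - a))⁻¹ = (3 * (1 - a))⁻¹ - 1 / 3 := by
    field_simp [show 1 - a ≠ 0 by linarith]
    ring
  induction n generalizing y with
  | zero =>
    have h1 : 1 ≤ (3 * (1 - a))⁻¹ := one_le_inv₀ (by linarith) |>.mpr (by linarith)
    simp only [Finset.range_zero, Finset.sum_empty]
    linarith [deficit_le y]
  | succ n ih =>
    have hshift : ∑ m ∈ Finset.range n, a ^ (m + 1) * distNearestInt (2 ^ (m + 1) * y)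
        = a * ∑ m ∈ Finset.range n, a ^ m * distNearestInt (2 ^ m * (2 * y)) := by
      rw [Finset.mul_sum]
      refine Finset.sum_congr rfl fun m _ => ?_
      ring_nf
    rw [Finset.sum_range_succ', hshift, pow_zero, pow_zero, one_mul, one_mul]
    have hscaled := mul_le_mul_of_nonneg_left (ih (2 * y)) (by linarith : 0 ≤ a)
    linarith [distNearestInt_add_deficit_le ha y]

lemma summable_pow_mul_distNearestInt (ha : 0 ≤ a) (ha1 : a < 1) (y : ℝ) :
    Summable fun m : ℕ => a ^ m * distNearestInt (2 ^ m * y) :=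
  .of_nonneg_of_le (fun m => mul_nonneg (pow_nonneg ha m) (distNearestInt_nonneg _))
    (fun m => mul_le_of_le_one_right (pow_nonneg ha m)
      ((distNearestInt_le_half _).trans (by norm_num)))
    (summable_geometric_of_lt_one ha ha1)

lemma tsum_pow_mul_distNearestInt_le (ha : 2 / 3 ≤ a) (ha1 : a < 1) (y : ℝ) :
    ∑' m : ℕ, a ^ m * distNearestInt (2 ^ m * y) ≤ (3 * (1 - a))⁻¹ :=
  (summable_pow_mul_distNearestInt (by linarith) ha1 y).tsum_le_of_sum_range_le fun n =>
    (sum_range_pow_mul_distNearestInt_le ha ha1 n y).trans (by linarith [deficit_nonneg y])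

lemma distNearestInt_two_pow_mul_third (m : ℕ) : distNearestInt (2 ^ m * (1 / 3)) = 1 / 3 := by
  induction m with
  | zero => norm_num [distNearestInt_of_mem_Ico]
  | succ m ih =>
    rw [pow_succ, mul_comm _ (2 : ℝ), mul_assoc, distNearestInt_two_mul, ih]
    norm_num

lemma tsum_pow_mul_distNearestInt_third (ha : 0 ≤ a) (ha1 : a < 1) :
    ∑' m : ℕ, a ^ m * distNearestInt (2 ^ m * (1 / 3)) = (3 * (1 - a))⁻¹ := by
  simp only [distNearestInt_two_pow_mul_third, tsum_mul_right,
    tsum_geometric_of_lt_one ha ha1, mul_inv]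
  ring

end Series

lemma xhat_eq_tsum {t : ℝ} (ht : t ∈ Set.Icc (0 : ℝ) 1) :
    xhat t = ∑' m : ℕ, (√2)⁻¹ ^ m * distNearestInt (2 ^ m * t) :=
  tsum_congr (sum_range_e ht)

lemma inv_sqrt_two_mem_Ico : (√2)⁻¹ ∈ Set.Ico (2 / 3 : ℝ) 1 := by
  have h2 : √2 * √2 = 2 := Real.mul_self_sqrt (by norm_num)
  have hpos : 0 < √2 := by positivity
  constructor
  · rw [le_inv_comm₀ (by norm_num) hpos]
    nlinarith
  · rw [inv_lt_one₀ hpos]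
    nlinarith

lemma inv_three_mul_one_sub_inv_sqrt_two : (3 * (1 - (√2)⁻¹))⁻¹ = (2 + √2) / 3 := by
  have h2 : √2 * √2 = 2 := Real.mul_self_sqrt (by norm_num)
  refine inv_eq_of_mul_eq_one_right ?_
  field_simp
  linear_combination h2

lemma abs_le_xhat {x : ℝ → ℝ} (hx : x ∈ mathcalX) {t : ℝ} (ht : t ∈ Set.Icc (0 : ℝ) 1) :
    |x t| ≤ xhat t := by
  obtain ⟨θ, hθ, hxθ⟩ := hx
  have hrow (m : ℕ) : ‖∑ k ∈ Finset.range (2 ^ m), θ m k * e m k t‖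
      ≤ ∑ k ∈ Finset.range (2 ^ m), e m k t := by
    refine (norm_sum_le _ _).trans (Finset.sum_le_sum fun k _ => ?_)
    have he : 0 ≤ e m k t := mul_nonneg (by positivity) (le_max_right _ _)
    rcases hθ m k with h | h <;> simp [h, abs_of_nonneg he]
  have hsum : HasSum (fun m => ∑ k ∈ Finset.range (2 ^ m), e m k t) (xhat t) := by
    simp only [sum_range_e ht, xhat_eq_tsum ht]
    exact (summable_pow_mul_distNearestInt (by linarith [inv_sqrt_two_mem_Ico.1])
      inv_sqrt_two_mem_Ico.2 t).hasSum
  rw [hxθ t, ← Real.norm_eq_abs]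
  exact tsum_of_norm_bounded hsum hrow

lemma xhat_le {t : ℝ} (ht : t ∈ Set.Icc (0 : ℝ) 1) : xhat t ≤ (2 + √2) / 3 := by
  rw [xhat_eq_tsum ht, ← inv_three_mul_one_sub_inv_sqrt_two]
  exact tsum_pow_mul_distNearestInt_le inv_sqrt_two_mem_Ico.1 inv_sqrt_two_mem_Ico.2 t

lemma xhat_third : xhat (1 / 3) = (2 + √2) / 3 := by
  rw [xhat_eq_tsum ⟨by norm_num, by norm_num⟩, ← inv_three_mul_one_sub_inv_sqrt_two]
  exact tsum_pow_mul_distNearestInt_third (by positivity) inv_sqrt_two_mem_Ico.2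

theorem stmt_7 :
    (∀ x ∈ mathcalX, ∀ t ∈ Set.Icc (0 : ℝ) 1, |x t| ≤ xhat t) ∧
    (∀ x ∈ mathcalX, ∀ t ∈ Set.Icc (0 : ℝ) 1, |x t| ≤ (2 + Real.sqrt 2) / 3) ∧
    (∃ x ∈ mathcalX, ∃ t ∈ Set.Icc (0 : ℝ) 1, |x t| = (2 + Real.sqrt 2) / 3) := by
  have hxhat : xhat ∈ mathcalX := ⟨fun _ _ => 1, fun _ _ => Or.inl rfl, fun t => by simp [xhat]⟩
  refine ⟨fun x hx t ht => abs_le_xhat hx ht,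
    fun x hx t ht => (abs_le_xhat hx ht).trans (xhat_le ht),
    xhat, hxhat, 1 / 3, ⟨by norm_num, by norm_num⟩, ?_⟩
  rw [xhat_third, abs_of_pos (by positivity)]
end

section
/- For x = Σ_{m=0}^{∞} Σ_{k=0}^{2^m−1} θ_{m,k} e_{m,k} with bounded real coefficients θ_{m,k}, the quadratic variation along the n-th dyadic partition satisfies ⟨x⟩₁ⁿ := Σ_{j=0}^{2^n−1} (x((j+1)2^{−n}) − x(j·2^{−n}))² = 2^{−n} Σ_{m=0}^{n−1} Σ_{k=0}^{2^m−1} θ_{m,k}². -/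
open Finset

lemma e00_of_nonpos {t : ℝ} (h : t ≤ 0) : e00 t = 0 :=
  max_eq_right ((min_le_left _ _).trans h)

lemma e00_of_one_le {t : ℝ} (h : 1 ≤ t) : e00 t = 0 :=
  max_eq_right ((min_le_right _ _).trans (by linarith))

lemma e00_of_le_half {t : ℝ} (h₀ : 0 ≤ t) (h : t ≤ 1 / 2) : e00 t = t := by
  rw [e00, min_eq_left (by linarith), max_eq_left h₀]

lemma e00_of_half_le {t : ℝ} (h : 1 / 2 ≤ t) (h₁ : t ≤ 1) : e00 t = 1 - t := by
  rw [e00, min_eq_right (by linarith), max_eq_left (by linarith)]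

lemma e00_intCast (z : ℤ) : e00 z = 0 := by
  rcases le_or_gt z 0 with h | h
  · exact e00_of_nonpos (by exact_mod_cast h)
  · exact e00_of_one_le (by exact_mod_cast h)

lemma e00_intCast_add_half (z : ℤ) : e00 (z + 1 / 2) = if z = 0 then 1 / 2 else 0 := by
  rcases lt_trichotomy z 0 with h | rfl | h
  · have : (z : ℝ) ≤ -1 := by exact_mod_cast Int.le_sub_one_of_lt h
    rw [if_neg h.ne, e00_of_nonpos (by linarith)]
  · rw [if_pos rfl, Int.cast_zero, zero_add, e00_of_le_half (by norm_num) le_rfl]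
  · have : (1 : ℝ) ≤ z := by exact_mod_cast h
    rw [if_neg h.ne', e00_of_one_le (by linarith)]

lemma two_mul_e00_midpoint {a b : ℝ} (hab : a ≤ b)
    (h : b ≤ 0 ∨ (0 ≤ a ∧ b ≤ 1 / 2) ∨ (1 / 2 ≤ a ∧ b ≤ 1) ∨ 1 ≤ a) :
    2 * e00 ((a + b) / 2) = e00 a + e00 b := by
  rcases h with h | ⟨h₀, h⟩ | ⟨h₀, h⟩ | h
  · rw [e00_of_nonpos h, e00_of_nonpos (by linarith), e00_of_nonpos (by linarith)]
    ring
  · rw [e00_of_le_half h₀ (by linarith), e00_of_le_half (by linarith) h,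
      e00_of_le_half (by linarith) (by linarith)]
    ring
  · rw [e00_of_half_le h₀ (by linarith), e00_of_half_le (by linarith) h,
      e00_of_half_le (by linarith) (by linarith)]
    ring
  · rw [e00_of_one_le h, e00_of_one_le (by linarith), e00_of_one_le (by linarith)]
    ring

lemma Finset.sum_range_two_mul {M : Type*} [AddCommMonoid M] (f : ℕ → M) (n : ℕ) :
    ∑ j ∈ range (2 * n), f j = ∑ j ∈ range n, (f (2 * j) + f (2 * j + 1)) := by
  induction n with
  | zero => simp
  | succ n ih =>
    rw [sum_range_succ, ← ih, show 2 * (n + 1) = 2 * n + 1 + 1 by ring, sum_range_succ,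
      sum_range_succ, add_assoc]

noncomputable def dyadicQV (f : ℝ → ℝ) (n : ℕ) : ℝ :=
  ∑ j ∈ range (2 ^ n), (f ((j + 1) / 2 ^ n) - f (j / 2 ^ n)) ^ 2

noncomputable def midSecondDiff (f : ℝ → ℝ) (n : ℕ) (j : ℤ) : ℝ :=
  2 * f ((2 * j + 1) / 2 ^ (n + 1)) - f (2 * j / 2 ^ (n + 1)) - f ((2 * j + 2) / 2 ^ (n + 1))

lemma dyadicQV_succ (f : ℝ → ℝ) (n : ℕ) :
    dyadicQV f (n + 1) = (dyadicQV f n + ∑ j ∈ range (2 ^ n), midSecondDiff f n j ^ 2) / 2 := by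
  have hpt : ∀ a : ℝ, 2 * a / 2 ^ (n + 1) = a / 2 ^ n := fun a => by
    rw [pow_succ]; field_simp
  rw [dyadicQV, pow_succ', sum_range_two_mul, dyadicQV, ← sum_add_distrib, sum_div]
  refine sum_congr rfl fun j _ => ?_
  simp only [midSecondDiff, Int.cast_natCast, Nat.cast_add, Nat.cast_mul, Nat.cast_ofNat,
    Nat.cast_one]
  rw [show (2 * j + 1 + 1 : ℝ) = 2 * (j + 1) by ring,
    show (2 * j + 2 : ℝ) = 2 * (j + 1) by ring]
  simp only [hpt]
  ring

lemma midSecondDiff_congr {f g : ℝ → ℝ} {n : ℕ}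
    (h : ∀ i : ℤ, f (i / 2 ^ (n + 1)) = g (i / 2 ^ (n + 1))) (j : ℤ) :
    midSecondDiff f n j = midSecondDiff g n j := by
  have h₀ := h (2 * j)
  have h₁ := h (2 * j + 1)
  have h₂ := h (2 * j + 2)
  push_cast at h₀ h₁ h₂
  rw [midSecondDiff, midSecondDiff, h₀, h₁, h₂]

lemma midSecondDiff_sum {ι : Type*} (s : Finset ι) (g : ι → ℝ → ℝ) (n : ℕ) (j : ℤ) :
    midSecondDiff (fun t => ∑ i ∈ s, g i t) n j = ∑ i ∈ s, midSecondDiff (g i) n j := by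
  simp only [midSecondDiff, mul_sum, ← sum_sub_distrib]

lemma midSecondDiff_const_mul (c : ℝ) (f : ℝ → ℝ) (n : ℕ) (j : ℤ) :
    midSecondDiff (fun t => c * f t) n j = c * midSecondDiff f n j := by
  simp only [midSecondDiff]; ring

lemma midSecondDiff_comp_dyadic (f : ℝ → ℝ) (m d : ℕ) (k j : ℤ) :
    midSecondDiff (fun t => f (2 ^ m * t - k)) (m + d) j = midSecondDiff f d (j - k * 2 ^ d) := by
  have hpt : ∀ a : ℝ, 2 ^ m * (a / 2 ^ (m + d + 1)) - k = (a - 2 * k * 2 ^ d) / 2 ^ (d + 1) :=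
    fun a => by field_simp; ring
  simp only [midSecondDiff, hpt]
  push_cast
  ring_nf

/-- The points `0`, `1/2`, `1` where `e00` bends all lie on the dyadic grid of level `d + 1`. -/
lemma two_mul_e00_dyadic_midpoint (d : ℕ) (v : ℤ) :
    2 * e00 ((v / 2 ^ (d + 1) + (v + 1) / 2 ^ (d + 1)) / 2) =
      e00 (v / 2 ^ (d + 1)) + e00 ((v + 1) / 2 ^ (d + 1)) := by
  refine two_mul_e00_midpoint (by gcongr; linarith) ?_
  have hP : (0 : ℝ) < 2 ^ (d + 1) := by positivity
  have hhalf : (1 / 2 : ℝ) * 2 ^ (d + 1) = 2 ^ d := by ring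
  simp only [div_le_iff₀ hP, le_div_iff₀ hP, hhalf, zero_mul, one_mul]
  rcases lt_or_ge v 0 with h₀ | h₀
  · exact Or.inl (by exact_mod_cast (h₀ : v + 1 ≤ 0))
  rcases lt_or_ge v (2 ^ d) with h₁ | h₁
  · exact Or.inr (Or.inl ⟨by exact_mod_cast h₀, by exact_mod_cast (h₁ : v + 1 ≤ 2 ^ d)⟩)
  rcases lt_or_ge v (2 ^ (d + 1)) with h₂ | h₂
  · exact Or.inr (Or.inr (Or.inl
      ⟨by exact_mod_cast h₁, by exact_mod_cast (h₂ : v + 1 ≤ 2 ^ (d + 1))⟩))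
  · exact Or.inr (Or.inr (Or.inr (by exact_mod_cast h₂)))

lemma midSecondDiff_e00 (d : ℕ) (v : ℤ) :
    midSecondDiff e00 d v = if d = 0 ∧ v = 0 then 1 else 0 := by
  rcases d with _ | d
  · have hmid : (2 * v + 1) / 2 ^ (0 + 1) = (v : ℝ) + 1 / 2 := by ring
    have hleft : 2 * v / 2 ^ (0 + 1) = (v : ℝ) := by ring
    have hright : (2 * v + 2) / 2 ^ (0 + 1) = ((v + 1 : ℤ) : ℝ) := by push_cast; ring
    rw [midSecondDiff, hmid, hleft, hright, e00_intCast, e00_intCast, e00_intCast_add_half]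
    split_ifs <;> simp_all
  · have hmid : (2 * v + 1) / 2 ^ (d + 1 + 1) =
        ((v / 2 ^ (d + 1) + (v + 1) / 2 ^ (d + 1)) / 2 : ℝ) := by
      field_simp; ring
    have hleft : 2 * v / 2 ^ (d + 1 + 1) = (v / 2 ^ (d + 1) : ℝ) := by field_simp; ring
    have hright : (2 * v + 2) / 2 ^ (d + 1 + 1) = ((v + 1) / 2 ^ (d + 1) : ℝ) := by
      field_simp; ring
    rw [midSecondDiff, hmid, hleft, hright, two_mul_e00_dyadic_midpoint, if_neg (by omega)]
    ring

lemma midSecondDiff_e {m n : ℕ} (h : m ≤ n) (k j : ℤ) :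
    midSecondDiff (e m k) n j = if m = n ∧ k = j then (2 : ℝ) ^ (-(n : ℝ) / 2) else 0 := by
  obtain ⟨d, rfl⟩ := Nat.exists_eq_add_of_le h
  rw [show e m k = fun t => (2 : ℝ) ^ (-(m : ℝ) / 2) * e00 (2 ^ m * t - k) from rfl,
    midSecondDiff_const_mul, midSecondDiff_comp_dyadic e00, midSecondDiff_e00]
  rcases d with _ | d
  · simp [sub_eq_zero, eq_comm]
  · simp

lemma e_dyadic_of_le {N m : ℕ} (h : N ≤ m) (k i : ℤ) : e m k (i / 2 ^ N) = 0 := by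
  obtain ⟨d, rfl⟩ := Nat.exists_eq_add_of_le h
  have hpt : (2 : ℝ) ^ (N + d) * (i / 2 ^ N) - k = ((i * 2 ^ d - k : ℤ) : ℝ) := by
    push_cast; field_simp; ring
  rw [e, hpt, e00_intCast, mul_zero]

noncomputable def schauderSeries (θ : ℕ → ℕ → ℝ) (t : ℝ) : ℝ :=
  ∑' m : ℕ, ∑ k ∈ range (2 ^ m), θ m k * e m k t

lemma schauderSeries_dyadic (θ : ℕ → ℕ → ℝ) (N : ℕ) (i : ℤ) :
    schauderSeries θ (i / 2 ^ N) =
      ∑ m ∈ range N, ∑ k ∈ range (2 ^ m), θ m k * e m k (i / 2 ^ N) :=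
  tsum_eq_sum fun m hm => sum_eq_zero fun k _ => by
    rw [e_dyadic_of_le (not_lt.mp (mt mem_range.mpr hm)), mul_zero]

lemma midSecondDiff_schauderSeries (θ : ℕ → ℕ → ℝ) (n : ℕ) {j : ℕ} (hj : j < 2 ^ n) :
    midSecondDiff (schauderSeries θ) n j = θ n j * (2 : ℝ) ^ (-(n : ℝ) / 2) := by
  rw [midSecondDiff_congr
    (g := fun t => ∑ m ∈ range (n + 1), ∑ k ∈ range (2 ^ m), θ m k * e m k t)
    (schauderSeries_dyadic θ (n + 1))]
  simp only [midSecondDiff_sum, midSecondDiff_const_mul]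
  rw [sum_range_succ, sum_eq_zero fun m hm => sum_eq_zero fun k _ => by
    rw [midSecondDiff_e (mem_range.mp hm).le, if_neg fun h => (mem_range.mp hm).ne h.1, mul_zero]]
  simp only [midSecondDiff_e le_rfl, true_and, Nat.cast_inj, mul_ite, mul_zero, zero_add]
  rw [sum_ite_eq' _ _ (fun k => θ n k * _), if_pos (mem_range.mpr hj)]

lemma dyadicQV_schauderSeries (θ : ℕ → ℕ → ℝ) (n : ℕ) :
    dyadicQV (schauderSeries θ) n = (∑ m ∈ range n, ∑ k ∈ range (2 ^ m), θ m k ^ 2) / 2 ^ n := by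
  induction n with
  | zero =>
    have h₀ : schauderSeries θ 0 = 0 := by simpa using schauderSeries_dyadic θ 0 0
    have h₁ : schauderSeries θ 1 = 0 := by simpa using schauderSeries_dyadic θ 0 1
    simp [dyadicQV, h₀, h₁]
  | succ n ih =>
    have hsq : ((2 : ℝ) ^ (-(n : ℝ) / 2)) ^ 2 = (2 ^ n)⁻¹ := by
      rw [← Real.rpow_natCast, ← Real.rpow_mul zero_le_two,
        show -(n : ℝ) / 2 * (2 : ℕ) = -n by push_cast; ring, Real.rpow_neg zero_le_two,
        Real.rpow_natCast]
    have hlevel : ∑ j ∈ range (2 ^ n), midSecondDiff (schauderSeries θ) n j ^ 2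
        = (∑ k ∈ range (2 ^ n), θ n k ^ 2) / 2 ^ n := by
      rw [div_eq_mul_inv, sum_mul]
      exact sum_congr rfl fun j hj => by
        rw [midSecondDiff_schauderSeries θ n (mem_range.mp hj), mul_pow, hsq]
    rw [dyadicQV_succ, ih, hlevel, sum_range_succ, pow_succ]
    field_simp

theorem stmt_16_general (θ : ℕ → ℕ → ℝ) (x : ℝ → ℝ)
    (hx : ∀ t, x t = ∑' m : ℕ, ∑ k ∈ Finset.range (2 ^ m), θ m k * e m k t)
    (n : ℕ) :
    ∑ j ∈ Finset.range (2 ^ n),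
        (x ((j + 1 : ℝ) * 2 ^ (-(n : ℤ))) - x ((j : ℝ) * 2 ^ (-(n : ℤ)))) ^ 2
      = (2 : ℝ) ^ (-(n : ℤ)) *
          ∑ m ∈ Finset.range n, ∑ k ∈ Finset.range (2 ^ m), θ m k ^ 2 := by
  obtain rfl : x = schauderSeries θ := funext hx
  have hpow : (2 : ℝ) ^ (-(n : ℤ)) = (2 ^ n)⁻¹ := by rw [zpow_neg, zpow_natCast]
  simp only [hpow, ← div_eq_mul_inv, inv_mul_eq_div]
  exact dyadicQV_schauderSeries θ n

theorem stmt_16 (θ : ℕ → ℕ → ℝ) (hθ : ∃ C : ℝ, ∀ m k, |θ m k| ≤ C)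
    (x : ℝ → ℝ)
    (hx : ∀ t, x t = ∑' m : ℕ, ∑ k ∈ Finset.range (2 ^ m), θ m k * e m k t)
    (n : ℕ) :
    ∑ j ∈ Finset.range (2 ^ n),
        (x ((j + 1 : ℝ) * 2 ^ (-(n : ℤ))) - x ((j : ℝ) * 2 ^ (-(n : ℤ)))) ^ 2
      = (2 : ℝ) ^ (-(n : ℤ)) *
          ∑ m ∈ Finset.range n, ∑ k ∈ Finset.range (2 ^ m), θ m k ^ 2 :=
  stmt_16_general θ x hx n
end
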